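/- If a product of standard simplices P = Δ^{n_1} × ⋯ × Δ^{n_m} is viewed as an ordered simplicial set, then for any necklace T, any simplicial map T → P extends uniquely to a map Δ[T] → P, where Δ[T] is the simplex on the ordered vertex set of T. -/

import Mathlib

open CategoryTheory Simplicial

namespace Paper

/-- The directed-edge relation on vertices of a simplicial set. -/
def edgeRel (X : SSet) (x y : X _⦋0⦌) : Prop :=
  ∃ e : X _⦋1⦌, X.δ 1 e = x ∧ X.δ 0 e = y

/-- `x ⪯ y` iff there is a finite directed path of 1-simplices from `x` to `y`. -/
def vertPath (X : SSet) : X _⦋0⦌ → X _⦋0⦌ → Prop :=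
  Relation.ReflTransGen (edgeRel X)

/-- The sequence of vertices of an `n`-simplex. -/
def vertexSeq {X : SSet} {n : ℕ} (x : X _⦋n⦌) : Fin (n + 1) → X _⦋0⦌ :=
  fun i => X.map (SimplexCategory.const (⦋0⦌ : SimplexCategory) ⦋n⦌ i).op x

/-- A simplicial set is *ordered* if the path preorder on its vertices is
antisymmetric and every simplex is determined by its sequence of vertices. -/
def Ordered (X : SSet) : Prop :=
  (∀ x y : X _⦋0⦌, vertPath X x y → vertPath X y x → x = y) ∧
  (∀ (n : ℕ) (x y : X _⦋n⦌), vertexSeq x = vertexSeq y → x = y)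

/-- A hands-on model of the standard `n`-simplex. -/
def Δstd (n : ℕ) : SSet where
  obj m := Fin (m.unop.len + 1) →o Fin (n + 1)
  map φ := TypeCat.ofHom fun f => f.comp φ.unop.toOrderHom
  map_id _ := rfl
  map_comp _ _ := rfl

/-- The condition cutting a necklace with joint set `J` out of `Δstd N`:
no joint lies strictly between the first and last vertex of the simplex. -/
def NeckCond {N : ℕ} (J : Finset (Fin (N + 1))) {m : SimplexCategoryᵒᵖ}
    (f : Fin (m.unop.len + 1) →o Fin (N + 1)) : Prop :=
  ∀ t ∈ J, ¬ (f 0 < t ∧ t < f (Fin.last m.unop.len))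

/-- The necklace with vertices `0,…,N` and joints `J` (a wedge of simplices glued
end to end; the beads span the intervals between consecutive joints). -/
def Necklace (N : ℕ) (J : Finset (Fin (N + 1))) : SSet where
  obj m := { f : Fin (m.unop.len + 1) →o Fin (N + 1) // NeckCond J f }
  map φ := TypeCat.ofHom fun f => ⟨f.1.comp φ.unop.toOrderHom, by
    intro t ht h
    exact f.2 t ht ⟨lt_of_le_of_lt (f.1.monotone (Fin.zero_le _)) h.1,
      lt_of_lt_of_le h.2 (f.1.monotone (Fin.le_last _))⟩⟩
  map_id _ := rfl
  map_comp _ _ := rfl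

/-- The vertex `v` of a necklace. -/
def vtx {N : ℕ} (J : Finset (Fin (N + 1))) (v : Fin (N + 1)) : (Necklace N J) _⦋0⦌ :=
  ⟨⟨fun _ => v, fun _ _ _ => le_rfl⟩, fun _ _ h => absurd (h.1.trans h.2) (lt_irrefl v)⟩

/-- The canonical inclusion of a necklace into the simplex on its vertices. -/
def neckIncl (N : ℕ) (J : Finset (Fin (N + 1))) : Necklace N J ⟶ Δstd N where
  app _ := TypeCat.ofHom fun f => f.1
  naturality _ _ _ := rfl

lemma eq_vtx {N : ℕ} {J : Finset (Fin (N + 1))} (x : (Necklace N J) _⦋0⦌) :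
    x = vtx J (x.1 0) := by
  refine Subtype.ext (OrderHom.ext _ _ (funext fun i => ?_))
  have : i = 0 := Subsingleton.elim (α := Fin 1) i 0
  rw [this]; rfl

/-- The map induced on vertices by a map of necklaces. -/
def nvmap {N N' : ℕ} {J : Finset (Fin (N + 1))} {J' : Finset (Fin (N' + 1))}
    (g : Necklace N J ⟶ Necklace N' J') : Fin (N + 1) → Fin (N' + 1) :=
  fun v => (g.app (Opposite.op (⦋0⦌ : SimplexCategory)) (vtx J v)).1 0

lemma app_vtx {N N' : ℕ} {J : Finset (Fin (N + 1))} {J' : Finset (Fin (N' + 1))}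
    (g : Necklace N J ⟶ Necklace N' J') (v : Fin (N + 1)) :
    g.app (Opposite.op (⦋0⦌ : SimplexCategory)) (vtx J v) = vtx J' (nvmap g v) :=
  eq_vtx _

lemma nvmap_comp {N N' N'' : ℕ} {J : Finset (Fin (N + 1))} {J' : Finset (Fin (N' + 1))}
    {J'' : Finset (Fin (N'' + 1))} (g : Necklace N J ⟶ Necklace N' J')
    (h : Necklace N' J' ⟶ Necklace N'' J'') :
    nvmap (g ≫ h) = nvmap h ∘ nvmap g := by
  funext v
  show (h.app _ (g.app _ (vtx J v))).1 0 = _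
  rw [app_vtx g v]
  rfl

/-- A map of simplicial sets is a *simple inclusion* if it has the right lifting
property with respect to the endpoint inclusions `∂Δ¹ ↪ T` for every necklace `T`. -/
def IsSimpleInclusion {A X : SSet} (i : A ⟶ X) : Prop :=
  ∀ (N : ℕ) (J : Finset (Fin (N + 1))), (0 : Fin (N + 1)) ∈ J → Fin.last N ∈ J →
    ∀ (v : Necklace N J ⟶ X) (a b : A _⦋0⦌),
      i.app _ a = v.app _ (vtx J 0) → i.app _ b = v.app _ (vtx J (Fin.last N)) →
      ∃ l : Necklace N J ⟶ A, l ≫ i = v ∧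
        l.app _ (vtx J 0) = a ∧ l.app _ (vtx J (Fin.last N)) = b

def Pstd (m : ℕ) (n : Fin m → ℕ) : SSet where
  obj k := ∀ i : Fin m, Fin (k.unop.len + 1) →o Fin (n i + 1)
  map φ := TypeCat.ofHom fun f => fun i => (f i).comp φ.unop.toOrderHom
  map_id _ := rfl
  map_comp _ _ := rfl

/-- A simplex of a simplicial set is nondegenerate if it is not the image of a
lower-dimensional simplex under a degeneracy operator. -/
def IsNondeg {X : SSet} {n : ℕ} (x : X _⦋n⦌) : Prop :=
  ∀ (m : ℕ) (σ : (⦋n⦌ : SimplexCategory) ⟶ ⦋m⦌) (y : X _⦋m⦌),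
    Function.Surjective σ.toOrderHom → x = X.map σ.op y → n ≤ m

/-- A simplex is degenerate if it is the image of a  strictly lower-dimensional
simplex under a (surjective) degeneracy operator. -/
def IsDegenerate {X : SSet} {n : ℕ} (x : X _⦋n⦌) : Prop :=
  ∃ (m : ℕ) (σ : (⦋n⦌ : SimplexCategory) ⟶ ⦋m⦌) (y : X _⦋m⦌),
    m < n ∧ Function.Surjective σ.toOrderHom ∧ x = X.map σ.op y


/-- The bead of a necklace spanning two consecutive joints `j ≤ j'`. -/
def bead {N : ℕ} (J : Finset (Fin (N + 1))) (j j' : Fin (N + 1)) (hle : j ≤ j')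
    (hcons : ∀ t ∈ J, ¬ (j < t ∧ t < j')) :
    (Necklace N J) _⦋j'.val - j.val⦌ :=
  ⟨⟨fun k => ⟨j.val + k.val, by
        have hk := k.isLt
        simp only [Opposite.unop_op, SimplexCategory.len_mk] at hk
        have := j'.isLt; omega⟩,
      fun k k' h => by
        simp only [Fin.mk_le_mk]
        exact Nat.add_le_add_left h j.val⟩,
    by
      intro t ht h
      refine hcons t ht ⟨?_, ?_⟩
      · have h1 : j.val + 0 < t.val := h.1
        simp only [Fin.lt_def] at h1 ⊢
        omega
      · have h2 : t.val < j.val + (j'.val - j.val) := h.2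
        have hle' : j.val ≤ j'.val := hle
        simp only [Fin.lt_def] at h2 ⊢
        omega⟩

/-- A map from a necklace is totally nondegenerate if it sends each bead to a
nondegenerate simplex. -/
def TotallyNondeg {N : ℕ} {J : Finset (Fin (N + 1))} {S : SSet}
    (f : Necklace N J ⟶ S) : Prop :=
  ∀ (j j' : Fin (N + 1)), j ∈ J → j' ∈ J → ∀ (hlt : j < j')
    (hcons : ∀ t ∈ J, ¬ (j < t ∧ t < j')),
    IsNondeg (f.app _ (bead J j j' hlt.le hcons))

/-- A levelwise surjection of simplicial sets. -/
def LevelSurj {X Y : SSet} (f : X ⟶ Y) : Prop :=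
  ∀ m, Function.Surjective (f.app m)

/-- The category of necklaces over `S` with endpoints `a` and `b`. -/
structure NecOver (S : SSet) (a b : S _⦋0⦌) where
  N : ℕ
  J : Finset (Fin (N + 1))
  h0 : (0 : Fin (N + 1)) ∈ J
  hN : Fin.last N ∈ J
  f : Necklace N J ⟶ S
  ha : f.app _ (vtx J 0) = a
  hb : f.app _ (vtx J (Fin.last N)) = b

instance (S : SSet) (a b : S _⦋0⦌) : Category (NecOver S a b) where
  Hom t u := { g : Necklace t.N t.J ⟶ Necklace u.N u.J //
    g ≫ u.f = t.f ∧ g.app _ (vtx t.J 0) = vtx u.J 0 ∧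
    g.app _ (vtx t.J (Fin.last t.N)) = vtx u.J (Fin.last u.N) }
  id t := ⟨𝟙 _, Category.id_comp _, rfl, rfl⟩
  comp {t u v} g h := ⟨g.1 ≫ h.1, by rw [Category.assoc, h.2.1, g.2.1],
    by show h.1.app _ (g.1.app _ _) = _; rw [g.2.2.1, h.2.2.1],
    by show h.1.app _ (g.1.app _ _) = _; rw [g.2.2.2, h.2.2.2]⟩
  id_comp g := Subtype.ext (Category.id_comp _)
  comp_id g := Subtype.ext (Category.comp_id _)
  assoc f g h := Subtype.ext (Category.assoc _ _ _)


/-- Flagged necklaces over `S` with endpoints `a, b` and flags of length `n`. -/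
structure FlaggedNec (S : SSet) (a b : S _⦋0⦌) (n : ℕ) where
  N : ℕ
  J : Finset (Fin (N + 1))
  h0 : (0 : Fin (N + 1)) ∈ J
  hN : Fin.last N ∈ J
  f : Necklace N J ⟶ S
  ha : f.app _ (vtx J 0) = a
  hb : f.app _ (vtx J (Fin.last N)) = b
  flag : Fin (n + 1) → Finset (Fin (N + 1))
  flag_mono : Monotone flag
  flag_joints : J ⊆ flag 0

instance (S : SSet) (a b : S _⦋0⦌) (n : ℕ) : Category (FlaggedNec S a b n) where
  Hom t u := { g : Necklace t.N t.J ⟶ Necklace u.N u.J //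
    g ≫ u.f = t.f ∧ g.app _ (vtx t.J 0) = vtx u.J 0 ∧
    g.app _ (vtx t.J (Fin.last t.N)) = vtx u.J (Fin.last u.N) ∧
    ∀ i, (t.flag i).image (nvmap g) = u.flag i }
  id t := ⟨𝟙 _, Category.id_comp _, rfl, rfl, fun i => by
    have : nvmap (𝟙 (Necklace t.N t.J)) = id := rfl
    rw [this, Finset.image_id]⟩
  comp {t u v} g h := ⟨g.1 ≫ h.1, by rw [Category.assoc, h.2.1, g.2.1],
    by show h.1.app _ (g.1.app _ _) = _; rw [g.2.2.1, h.2.2.1],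
    by show h.1.app _ (g.1.app _ _) = _; rw [g.2.2.2.1, h.2.2.2.1],
    fun i => by
      rw [nvmap_comp, ← Finset.image_image, g.2.2.2.2 i, h.2.2.2.2 i]⟩
  id_comp g := Subtype.ext (Category.id_comp _)
  comp_id g := Subtype.ext (Category.comp_id _)
  assoc f g h := Subtype.ext (Category.assoc _ _ _)


/-!
Simplices of `Δstd N` and of the product `Pstd m n` are monotone maps of vertices, and by
naturality every coordinate of a map into `Pstd m n` is read off on vertices. A map from the
necklace therefore yields, in each factor, a vertex map `Fin (N + 1) → Fin (n i + 1)`; it is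
monotone because consecutive vertices of a necklace always span an edge (no joint lies strictly
between them). Composing with these monotone maps gives the extension to `Δstd N`, and it is
unique because `Δstd N` and the necklace have the same vertices.
-/

namespace Pstd

variable {m : ℕ} {n : Fin m → ℕ}

lemma app_apply {X : SSet} (g : X ⟶ Pstd m n) {k : SimplexCategoryᵒᵖ} (x : X.obj k)
    (i : Fin m) (j : Fin (k.unop.len + 1)) :
    g.app k x i j = g.app _ (X.map (SimplexCategory.const ⦋0⦌ k.unop j).op x) i 0 := by
  have h := ConcreteCategory.congr_hom (g.naturality (SimplexCategory.const ⦋0⦌ k.unop j).op) x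
  simp only [types_comp_apply] at h
  rw [h]
  rfl

lemma hom_ext {X : SSet} {g g' : X ⟶ Pstd m n}
    (h : ∀ x : X _⦋0⦌, g.app _ x = g'.app _ x) : g = g' := by
  apply NatTrans.ext; funext k; apply ConcreteCategory.hom_ext; intro x; funext i
  refine OrderHom.ext _ _ (funext fun j => ?_)
  rw [app_apply, app_apply g', h]

end Pstd

def Δstd.toPstd (N : ℕ) {m : ℕ} {n : Fin m → ℕ} (φ : ∀ i, Fin (N + 1) →o Fin (n i + 1)) :
    Δstd N ⟶ Pstd m n where
  app _ := TypeCat.ofHom fun x i => (φ i).comp x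
  naturality _ _ _ := rfl

lemma neckIncl_app_vtx {N : ℕ} (J : Finset (Fin (N + 1))) (x : Fin 1 →o Fin (N + 1)) :
    (neckIncl N J).app _ (vtx J (x 0)) = x := by
  refine OrderHom.ext _ _ (funext fun j => ?_)
  rw [Fin.fin_one_eq_zero j]
  rfl

lemma neckIncl_cancel {N : ℕ} {J : Finset (Fin (N + 1))} {m : ℕ} {n : Fin m → ℕ}
    {g g' : Δstd N ⟶ Pstd m n} (h : neckIncl N J ≫ g = neckIncl N J ≫ g') : g = g' :=
  Pstd.hom_ext fun x => by
    rw [← neckIncl_app_vtx J x]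
    exact ConcreteCategory.congr_hom (NatTrans.congr_app h _) _

namespace Necklace

variable {N : ℕ} {J : Finset (Fin (N + 1))}

lemma map_const {k : SimplexCategoryᵒᵖ} (x : (Necklace N J).obj k) (j : Fin (k.unop.len + 1)) :
    (Necklace N J).map (SimplexCategory.const ⦋0⦌ k.unop j).op x = vtx J (x.1 j) :=
  rfl

variable (J) in
def edge (v : Fin N) : (Necklace N J) _⦋1⦌ :=
  ⟨⟨![v.castSucc, v.succ], Fin.monotone_iff_le_succ.2 fun j => by
      fin_cases j
      exact Fin.castSucc_le_succ v⟩,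
    fun _ _ h => (Fin.castSucc_lt_iff_succ_le.1 h.1).not_gt h.2⟩

variable {m : ℕ} {n : Fin m → ℕ}

def vertexMap (f : Necklace N J ⟶ Pstd m n) (i : Fin m) : Fin (N + 1) →o Fin (n i + 1) where
  toFun v := f.app _ (vtx J v) i 0
  monotone' := Fin.monotone_iff_le_succ.2 fun v => by
    have h := (f.app _ (edge J v) i).monotone (Fin.zero_le (1 : Fin 2))
    rw [Pstd.app_apply f (edge J v) i 0, Pstd.app_apply f (edge J v) i 1, map_const,
      map_const] at h
    exact h

lemma app_apply_eq_vertexMap (f : Necklace N J ⟶ Pstd m n) {k : SimplexCategoryᵒᵖ}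
    (x : (Necklace N J).obj k) (i : Fin m) (j : Fin (k.unop.len + 1)) :
    f.app k x i j = vertexMap f i (x.1 j) := by
  rw [Pstd.app_apply, map_const]
  rfl

lemma neckIncl_comp_toPstd_vertexMap (f : Necklace N J ⟶ Pstd m n) :
    neckIncl N J ≫ Δstd.toPstd N (vertexMap f) = f := by
  apply NatTrans.ext; funext k; apply ConcreteCategory.hom_ext; intro x; funext i
  refine OrderHom.ext _ _ (funext fun j => ?_)
  exact (app_apply_eq_vertexMap f x i j).symm

end Necklace

theorem stmt19_general (N : ℕ) (J : Finset (Fin (N + 1)))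
    (m : ℕ) (n : Fin m → ℕ) (f : Necklace N J ⟶ Pstd m n) :
    ∃! g : Δstd N ⟶ Pstd m n, neckIncl N J ≫ g = f :=
  ⟨Δstd.toPstd N (Necklace.vertexMap f), Necklace.neckIncl_comp_toPstd_vertexMap f,
    fun _ hg => neckIncl_cancel (hg.trans (Necklace.neckIncl_comp_toPstd_vertexMap f).symm)⟩

theorem stmt19 (N : ℕ) (J : Finset (Fin (N + 1)))
    (h0 : (0 : Fin (N + 1)) ∈ J) (hN : Fin.last N ∈ J)
    (m : ℕ) (n : Fin m → ℕ) (f : Necklace N J ⟶ Pstd m n) :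
    ∃! g : Δstd N ⟶ Pstd m n, neckIncl N J ≫ g = f :=
  stmt19_general N J m n f

end Paper
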